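/- arXiv:1506.02781 — 2 statements merged into one kernel-verified Lean document; each statement's English description precedes it below -/
import Mathlib

section
/- For every q ≥ 1 and all vectors x, y in ℝ^d, the monotonicity inequality (|x|^(q-1) x - |y|^(q-1) y) · (x - y) ≥ 2^(1-q) |x - y|^(q+1) holds; in particular the left-hand side is nonnegative. -/
open scoped RealInnerProductSpace

/-!
Write `a = ‖x‖`, `b = ‖y‖`, `t = ‖x - y‖`. Eliminating `⟪x, y⟫` through `t² = a² - 2⟪x, y⟫ + b²`,
the inner product becomes `α t² + β` with `α = (a^(q-1) + b^(q-1))/2` and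
`β = (a^(q-1) - b^(q-1))(a² - b²)/2 ≥ 0`. Since `t ≤ a + b`, the left-hand side is at most
`c t²` with `c = 2^(1-q) (a + b)^(q-1)`, so it suffices that the affine function
`u ↦ (α - c) u + β` is nonnegative on `[0, (a + b)²]`. At `u = 0` this is `β ≥ 0`; at
`u = (a + b)²` it reduces to the power mean inequality `2^(1-q) (a + b)^q ≤ a^q + b^q`.
-/

lemma two_rpow_one_sub_mul_add_rpow_le {a b q : ℝ} (ha : 0 ≤ a) (hb : 0 ≤ b) (hq : 1 ≤ q) :
    (2 : ℝ) ^ (1 - q) * (a + b) ^ q ≤ a ^ q + b ^ q := by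
  have hmean : ((1 / 2 : ℝ) • a + (1 / 2 : ℝ) • b) ^ q ≤
      (1 / 2 : ℝ) • a ^ q + (1 / 2 : ℝ) • b ^ q :=
    (convexOn_rpow hq).2 ha hb (by norm_num) (by norm_num) (by norm_num)
  have hhalf : ((1 / 2 : ℝ) • a + (1 / 2 : ℝ) • b) ^ q = (2 : ℝ) ^ (-q) * (a + b) ^ q := by
    rw [smul_eq_mul, smul_eq_mul, ← mul_add, Real.mul_rpow (by norm_num) (by positivity),
      one_div, Real.inv_rpow (by norm_num), Real.rpow_neg (by norm_num)]
  have htwo : (2 : ℝ) ^ (1 - q) = 2 * 2 ^ (-q) := by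
    rw [sub_eq_add_neg, Real.rpow_add (by norm_num), Real.rpow_one]
  rw [hhalf, smul_eq_mul, smul_eq_mul] at hmean
  rw [htwo]
  linarith

lemma rpow_sub_one_mul_self {a q : ℝ} (ha : 0 ≤ a) (hq : q ≠ 0) : a ^ (q - 1) * a = a ^ q := by
  simpa using (Real.rpow_add_one' ha (by simpa using hq : q - 1 + 1 ≠ 0)).symm

lemma rpow_sub_rpow_mul_sq_sub_sq_nonneg {a b p : ℝ} (ha : 0 ≤ a) (hb : 0 ≤ b) (hp : 0 ≤ p) :
    0 ≤ (a ^ p - b ^ p) * (a ^ 2 - b ^ 2) := by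
  rcases le_total a b with hab | hba
  · exact mul_nonneg_of_nonpos_of_nonpos
      (sub_nonpos.2 (Real.rpow_le_rpow ha hab hp)) (sub_nonpos.2 (pow_le_pow_left₀ ha hab 2))
  · exact mul_nonneg
      (sub_nonneg.2 (Real.rpow_le_rpow hb hba hp)) (sub_nonneg.2 (pow_le_pow_left₀ hb hba 2))

lemma inner_smul_sub_smul_sub {E : Type*} [NormedAddCommGroup E] [InnerProductSpace ℝ E]
    (A B : ℝ) (x y : E) :
    ⟪A • x - B • y, x - y⟫ =
      (A + B) / 2 * ‖x - y‖ ^ 2 + (A - B) * (‖x‖ ^ 2 - ‖y‖ ^ 2) / 2 := by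
  rw [norm_sub_sq_real]
  simp only [inner_sub_left, inner_sub_right, real_inner_smul_left,
    real_inner_self_eq_norm_sq, real_inner_comm y x]
  ring

lemma two_rpow_one_sub_mul_rpow_add_one_le {a b t q : ℝ} (ha : 0 ≤ a) (hb : 0 ≤ b)
    (ht : 0 ≤ t) (hq : 1 ≤ q) (htab : t ≤ a + b) :
    (2 : ℝ) ^ (1 - q) * t ^ (q + 1) ≤
      (a ^ (q - 1) + b ^ (q - 1)) / 2 * t ^ 2
        + (a ^ (q - 1) - b ^ (q - 1)) * (a ^ 2 - b ^ 2) / 2 := by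
  set c := (2 : ℝ) ^ (1 - q) * (a + b) ^ (q - 1)
  have hab : 0 ≤ a + b := add_nonneg ha hb
  have hq0 : q ≠ 0 := by linarith
  have hle_c : (2 : ℝ) ^ (1 - q) * t ^ (q + 1) ≤ c * t ^ 2 := by
    have hsplit : t ^ (q + 1) = t ^ (q - 1) * t ^ 2 := by
      rw [Real.rpow_add_one' ht (by linarith), ← rpow_sub_one_mul_self ht hq0]
      ring
    rw [hsplit, ← mul_assoc]
    exact mul_le_mul_of_nonneg_right (mul_le_mul_of_nonneg_left
      (Real.rpow_le_rpow ht htab (by linarith)) (by positivity)) (sq_nonneg t)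
  have hβ := rpow_sub_rpow_mul_sq_sub_sq_nonneg ha hb (by linarith : 0 ≤ q - 1)
  have hend : c * (a + b) ^ 2 ≤ (a ^ (q - 1) + b ^ (q - 1)) / 2 * (a + b) ^ 2
      + (a ^ (q - 1) - b ^ (q - 1)) * (a ^ 2 - b ^ 2) / 2 := by
    have hmean := mul_le_mul_of_nonneg_right (two_rpow_one_sub_mul_add_rpow_le ha hb hq) hab
    rw [← rpow_sub_one_mul_self ha hq0, ← rpow_sub_one_mul_self hb hq0,
      ← rpow_sub_one_mul_self hab hq0] at hmean
    linarith
  have htsq : t ^ 2 ≤ (a + b) ^ 2 := pow_le_pow_left₀ ht htab 2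
  -- an affine function of `t²` that is nonnegative at `t² = 0` and at `t² = (a + b)²`
  rcases le_total c ((a ^ (q - 1) + b ^ (q - 1)) / 2) with hc | hc
  · nlinarith
  · nlinarith

theorem two_rpow_one_sub_mul_norm_sub_rpow_le_inner {E : Type*} [NormedAddCommGroup E]
    [InnerProductSpace ℝ E] {q : ℝ} (hq : 1 ≤ q) (x y : E) :
    (2 : ℝ) ^ (1 - q) * ‖x - y‖ ^ (q + 1) ≤ ⟪‖x‖ ^ (q - 1) • x - ‖y‖ ^ (q - 1) • y, x - y⟫ := by
  rw [inner_smul_sub_smul_sub]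
  exact two_rpow_one_sub_mul_rpow_add_one_le (norm_nonneg x) (norm_nonneg y) (norm_nonneg _) hq
    (norm_sub_le x y)

/-- Monotonicity of the `q`-Laplacian-type vector field: for `q ≥ 1` and all `x, y ∈ ℝ^d`,
`(|x|^(q-1) x - |y|^(q-1) y) · (x - y) ≥ 2^(1-q) |x - y|^(q+1) ≥ 0`. -/
theorem qLaplace_monotone (d : ℕ) (q : ℝ) (hq : 1 ≤ q)
    (x y : EuclideanSpace ℝ (Fin d)) :
    (2:ℝ) ^ (1 - q) * ‖x - y‖ ^ (q + 1)
      ≤ (inner ℝ (‖x‖ ^ (q - 1) • x - ‖y‖ ^ (q - 1) • y) (x - y) : ℝ) ∧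
    0 ≤ (inner ℝ (‖x‖ ^ (q - 1) • x - ‖y‖ ^ (q - 1) • y) (x - y) : ℝ) := by
  have hmono := two_rpow_one_sub_mul_norm_sub_rpow_le_inner hq x y
  exact ⟨hmono, (by positivity : (0 : ℝ) ≤ _).trans hmono⟩
end

section
/- Let q ≥ 1 be real and x, y ∈ ℝ^d. Then |x|^(q-1) x - |y|^(q-1) y = (x - y) ∫₀¹ |y + σ(x - y)|^(q-1) dσ + (q - 1) ∫₀¹ L(y + σ(x - y), x - y) dσ, where L(z, w) := |z|^(q-3) (z · w) z (with L(0, w) := 0). -/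
open scoped RealInnerProductSpace
open MeasureTheory Filter Topology Asymptotics

/-!
With `p = q - 1 > 0`, the map `Φ v = ‖v‖ ^ p • v` is differentiable everywhere with
`DΦ(v) w = ‖v‖ ^ p • w + p ‖v‖ ^ (p - 2) ⟪v, w⟫ • v`: at `v = 0` because `Φ v = o(v)`, elsewhere
because `‖v‖ ^ p = (‖v‖ ^ 2) ^ (p / 2)` is smooth. The second term is bounded by `‖v‖ ^ p ‖w‖`,
so `DΦ` is continuous along the segment from `y` to `x` and the formula is the fundamental
theorem of calculus for `σ ↦ Φ (y + σ • (x - y))`. For `q = 1` both sides are `x - y`.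
-/

variable {E : Type*} [NormedAddCommGroup E] [InnerProductSpace ℝ E] {p : ℝ}

theorem hasFDerivAt_norm_rpow_of_ne_zero (p : ℝ) {v : E} (hv : v ≠ 0) :
    HasFDerivAt (fun u : E ↦ ‖u‖ ^ p) ((p * ‖v‖ ^ (p - 2)) • innerSL ℝ v) v := by
  apply HasStrictFDerivAt.hasFDerivAt
  convert! (hasStrictFDerivAt_norm_sq v).rpow_const (p := p / 2) (by simp [hv]) using 0
  simp_rw [← Real.rpow_natCast_mul (norm_nonneg _), ← Nat.cast_smul_eq_nsmul ℝ, smul_smul]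
  ring_nf

theorem hasFDerivAt_norm_rpow_smul_self_zero (hp : 0 < p) :
    HasFDerivAt (fun u : E ↦ ‖u‖ ^ p • u) (0 : E →L[ℝ] E) 0 := by
  refine .of_isLittleO ?_
  have hsmall : (fun u : E ↦ ‖u‖ ^ p) =o[𝓝 0] (fun _ ↦ (1 : ℝ)) := by
    refine (isLittleO_const_iff one_ne_zero).mpr ?_
    simpa [hp.ne'] using (continuous_norm.rpow_const fun _ ↦ .inr hp.le).tendsto (0 : E)
  simpa using hsmall.smul_isBigO (isBigO_refl (fun u : E ↦ u) (𝓝 0))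

theorem hasFDerivAt_norm_rpow_smul_self (hp : 0 < p) (v : E) :
    HasFDerivAt (fun u : E ↦ ‖u‖ ^ p • u)
      (‖v‖ ^ p • ContinuousLinearMap.id ℝ E + ((p * ‖v‖ ^ (p - 2)) • innerSL ℝ v).smulRight v)
      v := by
  rcases eq_or_ne v 0 with rfl | hv
  · simpa [hp.ne'] using hasFDerivAt_norm_rpow_smul_self_zero (E := E) hp
  · exact (hasFDerivAt_norm_rpow_of_ne_zero p hv).fun_smul (hasFDerivAt_id v)

theorem norm_norm_rpow_mul_inner_smul_le (p : ℝ) (v w : E) :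
    ‖(‖v‖ ^ (p - 2) * ⟪v, w⟫) • v‖ ≤ ‖v‖ ^ p * ‖w‖ := by
  rcases eq_or_ne v 0 with rfl | hv
  · simp; positivity
  have hv' : ‖v‖ ≠ 0 := norm_ne_zero_iff.mpr hv
  calc ‖(‖v‖ ^ (p - 2) * ⟪v, w⟫) • v‖ = ‖v‖ ^ (p - 2) * |⟪v, w⟫| * ‖v‖ := by
        rw [norm_smul, Real.norm_eq_abs, abs_mul, abs_of_nonneg (by positivity)]
    _ ≤ ‖v‖ ^ (p - 2) * (‖v‖ * ‖w‖) * ‖v‖ := by gcongr; exact abs_real_inner_le_norm v w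
    _ = ‖v‖ ^ p * ‖w‖ := by
        rw [show p = p - 2 + 1 + 1 by ring, Real.rpow_add_one hv', Real.rpow_add_one hv']
        ring_nf

theorem continuous_norm_rpow_mul_inner_smul (hp : 0 < p) (w : E) :
    Continuous fun v : E ↦ (‖v‖ ^ (p - 2) * ⟪v, w⟫) • v := by
  refine continuous_iff_continuousAt.mpr fun v ↦ ?_
  rcases eq_or_ne v 0 with rfl | hv
  · have hbound : Tendsto (fun u : E ↦ ‖u‖ ^ p * ‖w‖) (𝓝 0) (𝓝 0) := by
      have : Continuous fun u : E ↦ ‖u‖ ^ p * ‖w‖ :=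
        (continuous_norm.rpow_const fun _ ↦ .inr hp.le).mul continuous_const
      simpa [hp.ne'] using this.tendsto 0
    simpa [ContinuousAt] using
      squeeze_zero_norm (norm_norm_rpow_mul_inner_smul_le p · w) hbound
  · exact ((continuous_norm.continuousAt.rpow_const (.inl (norm_ne_zero_iff.mpr hv))).mul
      (continuousAt_id.inner continuousAt_const)).smul continuousAt_id

theorem hasDerivAt_norm_rpow_smul_self_along_line (hp : 0 < p) (y w : E) (σ : ℝ) :
    HasDerivAt (fun t : ℝ ↦ ‖y + t • w‖ ^ p • (y + t • w))
      (‖y + σ • w‖ ^ p • w + p • ((‖y + σ • w‖ ^ (p - 2) * ⟪y + σ • w, w⟫) • (y + σ • w))) σ := by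
  have hline : HasDerivAt (fun t : ℝ ↦ y + t • w) w σ := by
    simpa using ((hasDerivAt_id σ).smul_const w).const_add y
  refine ((hasFDerivAt_norm_rpow_smul_self hp _).comp_hasDerivAt σ hline).congr_deriv ?_
  simp only [add_apply, smul_apply, ContinuousLinearMap.id_apply,
    ContinuousLinearMap.smulRight_apply, innerSL_apply_apply, smul_smul, mul_assoc, smul_eq_mul]

/-- Representation formula: for `q ≥ 1` and `x, y ∈ ℝ^d`,
`|x|^(q-1) x - |y|^(q-1) y = (x-y) ∫₀¹ |y+σ(x-y)|^(q-1) dσ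
  + (q-1) ∫₀¹ L(y+σ(x-y), x-y) dσ`, where `L(z,w) = |z|^(q-3) (z·w) z`. -/
theorem qLaplace_representation (d : ℕ) (q : ℝ) (hq : 1 ≤ q)
    (x y : EuclideanSpace ℝ (Fin d)) :
    (‖x‖ ^ (q - 1)) • x - (‖y‖ ^ (q - 1)) • y
      = (∫ σ in (0:ℝ)..1, ‖y + σ • (x - y)‖ ^ (q - 1)) • (x - y)
        + (q - 1) •
          ∫ σ in (0:ℝ)..1,
            ((‖y + σ • (x - y)‖ ^ (q - 3)) * (inner ℝ (y + σ • (x - y)) (x - y) : ℝ))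
              • (y + σ • (x - y)) := by
  rcases hq.eq_or_lt with rfl | hq
  · simp
  have hp : 0 < q - 1 := sub_pos.mpr hq
  rw [show q - 3 = q - 1 - 2 by ring]
  have hline : Continuous fun σ : ℝ ↦ y + σ • (x - y) := by fun_prop
  have hradial : Continuous fun σ : ℝ ↦ ‖y + σ • (x - y)‖ ^ (q - 1) :=
    hline.norm.rpow_const fun _ ↦ .inr hp.le
  have hangular := (continuous_norm_rpow_mul_inner_smul hp (x - y)).comp hline
  have hradial_int : IntervalIntegrable (fun σ : ℝ ↦ ‖y + σ • (x - y)‖ ^ (q - 1) • (x - y))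
      volume 0 1 := (hradial.smul continuous_const).intervalIntegrable 0 1
  have hangular_int : IntervalIntegrable (fun σ : ℝ ↦ (q - 1) • ((‖y + σ • (x - y)‖ ^ (q - 1 - 2)
      * ⟪y + σ • (x - y), x - y⟫) • (y + σ • (x - y)))) volume 0 1 :=
    (hangular.const_smul (q - 1)).intervalIntegrable 0 1
  have hftc := intervalIntegral.integral_eq_sub_of_hasDerivAt
    (fun σ _ ↦ hasDerivAt_norm_rpow_smul_self_along_line hp y (x - y) σ)
    (hradial_int.add hangular_int)
  rw [intervalIntegral.integral_add hradial_int hangular_int, intervalIntegral.integral_smul_const,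
    intervalIntegral.integral_smul] at hftc
  simpa using hftc.symm
end
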